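/- Descent lemma for coordinate-wise adaptive updates (Lemma 5). Let F : ℝ^d → ℝ be differentiable with L_F-Lipschitz gradient. Let 0 < c_l ≤ c_u and η > 0 satisfy η L_F ≤ c_l/(2 c_u²). Let w, m ∈ ℝ^d and let s ∈ ℝ^d satisfy η c_l ≤ s_j ≤ η c_u for every coordinate j. Set w₊ = w − s ⊙ m, where ⊙ denotes the coordinatewise product. Then F(w₊) ≤ F(w) + (η c_u/2)‖∇F(w) − m‖² − (η c_l/2)‖∇F(w)‖² − (η c_l/4)‖m‖². -/

import Mathlib

/-!
By the descent lemma for an `L`-smooth function, `F w₊ ≤ F w + ⟪∇F w, δ⟫ + L/2 ‖δ‖²` with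
`δ = -(s ⊙ m)`, and both terms split over coordinates. In coordinate `j`, polarization gives
`-s g m = s/2 ((g - m)² - g² - m²)`; the bounds on `s` handle the first two squares, and the
step-size condition forces `L s ≤ 1/2`, so the curvature term `L s² m² / 2` costs at most half of
`s m² / 2 ≥ η c_l m² / 2`.
-/

open InnerProductSpace Set

theorem le_add_deriv_zero_add_half_of_deriv_le {φ φ' : ℝ → ℝ} {C : ℝ}
    (hφ : ∀ t, HasDerivAt φ (φ' t) t) (hφ' : ∀ t ∈ Ico (0 : ℝ) 1, φ' t ≤ φ' 0 + C * t) :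
    φ 1 ≤ φ 0 + φ' 0 + C / 2 := by
  have hB : ∀ t, HasDerivAt (fun t => φ 0 + t * φ' 0 + C / 2 * t ^ 2) (φ' 0 + C * t) t := by
    intro t
    refine (((hasDerivAt_id' t).mul_const (φ' 0)).const_add (φ 0)).add
      ((hasDerivAt_pow 2 t).const_mul (C / 2)) |>.congr_deriv ?_
    ring
  have := image_le_of_deriv_right_le_deriv_boundary (a := 0) (b := 1) (f := φ)
    (fun t _ => (hφ t).continuousAt.continuousWithinAt)
    (fun t _ => (hφ t).hasDerivWithinAt) (by simp)
    (fun t _ => (hB t).continuousAt.continuousWithinAt)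
    (fun t _ => (hB t).hasDerivWithinAt) hφ' (right_mem_Icc.2 zero_le_one)
  simpa using this

theorem hasDerivAt_comp_add_smul {E : Type*} [NormedAddCommGroup E] [InnerProductSpace ℝ E]
    [CompleteSpace E] {F : E → ℝ} (hF : Differentiable ℝ F) (x v : E) (t : ℝ) :
    HasDerivAt (fun t : ℝ => F (x + t • v)) ⟪gradient F (x + t • v), v⟫_ℝ t := by
  have hline : HasDerivAt (fun t : ℝ => x + t • v) v t := by
    simpa using ((hasDerivAt_id t).smul_const v).const_add x
  have := (hF _).hasGradientAt.hasFDerivAt.comp_hasDerivAt t hline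
  rwa [toDual_apply_apply] at this

theorem le_add_inner_gradient_add_half_sq {E : Type*} [NormedAddCommGroup E]
    [InnerProductSpace ℝ E] [CompleteSpace E] {F : E → ℝ} {L : ℝ} (hF : Differentiable ℝ F)
    (hL : ∀ x y, ‖gradient F x - gradient F y‖ ≤ L * ‖x - y‖) (x y : E) :
    F y ≤ F x + ⟪gradient F x, y - x⟫_ℝ + L / 2 * ‖y - x‖ ^ 2 := by
  have key := le_add_deriv_zero_add_half_of_deriv_le (C := L * ‖y - x‖ ^ 2)
    (hasDerivAt_comp_add_smul hF x (y - x)) fun t ht => by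
      have hlip := hL (x + t • (y - x)) x
      rw [add_sub_cancel_left, norm_smul, Real.norm_of_nonneg ht.1] at hlip
      have := (real_inner_le_norm _ (y - x)).trans
        (mul_le_mul_of_nonneg_right hlip (norm_nonneg (y - x)))
      rw [inner_sub_left] at this
      simp only [zero_smul, add_zero]
      linarith
  simpa [mul_div_right_comm] using key

theorem adaptive_step_coord_le {L η cl cu a b t : ℝ} (hcl : 0 < cl) (hclu : cl ≤ cu) (hη : 0 < η)
    (hηL : η * L ≤ cl / (2 * cu ^ 2)) (ht : η * cl ≤ t ∧ t ≤ η * cu) :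
    a * -(t * b) + L / 2 * (t * b) ^ 2 ≤
      η * cu / 2 * (a - b) ^ 2 - η * cl / 2 * a ^ 2 - η * cl / 4 * b ^ 2 := by
  obtain ⟨htl, htu⟩ := ht
  have ht0 : 0 < t := (mul_pos hη hcl).trans_le htl
  have hcu : 0 < cu := hcl.trans_le hclu
  have hLt : L * t ≤ 1 / 2 := by
    rcases le_or_gt L 0 with hL | hL
    · nlinarith
    · calc L * t ≤ L * (η * cu) := by gcongr
        _ = (η * L) * cu := by ring
        _ ≤ cl / (2 * cu ^ 2) * cu := by gcongr
        _ = cl / cu / 2 := by field_simp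
        _ ≤ 1 / 2 := by gcongr; exact (div_le_one hcu).2 hclu
  nlinarith [mul_le_mul_of_nonneg_right htu (sq_nonneg (a - b)),
    mul_le_mul_of_nonneg_right htl (sq_nonneg a), mul_le_mul_of_nonneg_right htl (sq_nonneg b),
    mul_le_mul_of_nonneg_right hLt (mul_nonneg ht0.le (sq_nonneg b))]

/-- Descent lemma for coordinate-wise adaptive updates (Lemma 5).
Here `wplus = w - s ⊙ m` is expressed coordinatewise. -/
theorem descent_lemma_adaptive
    (d : ℕ) (LF cl cu : ℝ) (hcl : 0 < cl) (hclu : cl ≤ cu)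
    (F : EuclideanSpace ℝ (Fin d) → ℝ)
    (hFdiff : Differentiable ℝ F)
    (hFsmooth : ∀ x y, ‖gradient F x - gradient F y‖ ≤ LF * ‖x - y‖)
    (η : ℝ) (hη : 0 < η) (hηL : η * LF ≤ cl / (2 * cu ^ 2))
    (w m s wplus : EuclideanSpace ℝ (Fin d))
    (hs : ∀ j, η * cl ≤ s j ∧ s j ≤ η * cu)
    (hwplus : ∀ j, wplus j = w j - s j * m j) :
    F wplus ≤ F w + (η * cu / 2) * ‖gradient F w - m‖ ^ 2
      - (η * cl / 2) * ‖gradient F w‖ ^ 2 - (η * cl / 4) * ‖m‖ ^ 2 := by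
  set g := gradient F w
  have hinner : ⟪g, wplus - w⟫_ℝ = ∑ j, g j * -(s j * m j) := by
    simp only [PiLp.inner_apply, PiLp.sub_apply, hwplus, RCLike.inner_apply', conj_trivial,
      sub_sub_cancel_left]
  have hnorm : ‖wplus - w‖ ^ 2 = ∑ j, (s j * m j) ^ 2 := by
    simp only [EuclideanSpace.real_norm_sq_eq, PiLp.sub_apply, hwplus, sub_sub_cancel_left, neg_sq]
  calc F wplus ≤ F w + ⟪g, wplus - w⟫_ℝ + LF / 2 * ‖wplus - w‖ ^ 2 :=
        le_add_inner_gradient_add_half_sq hFdiff hFsmooth w wplus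
    _ = F w + ∑ j, (g j * -(s j * m j) + LF / 2 * (s j * m j) ^ 2) := by
        rw [hinner, hnorm, Finset.mul_sum, add_assoc, Finset.sum_add_distrib]
    _ ≤ F w + ∑ j, (η * cu / 2 * (g j - m j) ^ 2 - η * cl / 2 * g j ^ 2
          - η * cl / 4 * m j ^ 2) := by
        gcongr with j
        exact adaptive_step_coord_le hcl hclu hη hηL (hs j)
    _ = _ := by
        simp only [EuclideanSpace.real_norm_sq_eq, PiLp.sub_apply, Finset.sum_sub_distrib,
          Finset.mul_sum]
        ring
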